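/- Let W : [0,1] → ℝ be continuous and suppose that for every ε > 0 and θ > 0 there exist δ ∈ (0, ε) and s, t ∈ [0,1] with |s − t| < δ and |W(s) − W(t)| ≥ (√2 − θ)·(δ·log(1/δ))^{1/2}. Then there is no n₀ such that for all n ≥ n₀ there exists x ∈ {±1}^n with sup_{t∈[0,1]} |W(t) − ℓ_x(t)| ≤ (1/2)·√((log n)/n). -/

import Mathlib

/-!
Take `δ` from the hypothesis with `√2 - θ = 13/10` and `δ` tiny, and put `n = ⌈1/δ⌉`, so that
`1/δ ≤ n ≤ 2/δ`. Over a gap `|s - t| < δ ≤ 2/n` the walk `ell n x` moves by `O(1/√n)`, so an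
approximation within `(1/2)√(log n / n)` forces `|W s - W t| ≤ (√(log n) + 5)/√n`. On the other
hand `δ log (1/δ) ≥ (log n - log 2)/n`, so `|W s - W t| ≥ (13/10)√(log n - log 2)/√n`, which is
larger once `log n` is large.
-/

open Finset

/-- The scaled linear interpolation of the partial sums of `x`. -/
noncomputable def ell (n : ℕ) (x : ℕ → ℝ) (t : ℝ) : ℝ :=
  (∑ i ∈ Finset.range ⌊t * n⌋₊, x i) / Real.sqrt n
    + (t * n - ⌊t * n⌋₊) * x ⌊t * n⌋₊ / Real.sqrt n

open Real

noncomputable def partialSumInterp (x : ℕ → ℝ) (u : ℝ) : ℝ :=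
  ∑ i ∈ range ⌊u⌋₊, x i + (u - ⌊u⌋₊) * x ⌊u⌋₊

lemma ell_eq_partialSumInterp (n : ℕ) (x : ℕ → ℝ) (t : ℝ) :
    ell n x t = partialSumInterp x (t * n) / √n := by
  rw [ell, partialSumInterp, add_div, mul_div_assoc]

section partialSumInterp

variable {n : ℕ} {x : ℕ → ℝ}

lemma abs_partialSumInterp_sub_sum_floor_le (hx : ∀ i < n, |x i| ≤ 1) {u : ℝ} (hu : 0 ≤ u)
    (hun : u ≤ n) : |partialSumInterp x u - ∑ i ∈ range ⌊u⌋₊, x i| ≤ 1 := by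
  rw [partialSumInterp, add_sub_cancel_left, abs_mul]
  rcases (Nat.floor_le_of_le hun).lt_or_eq with hlt | heq
  · have hfrac : |u - ⌊u⌋₊| ≤ 1 :=
      abs_le.2 ⟨by linarith [Nat.floor_le hu], by linarith [Nat.lt_floor_add_one u]⟩
    simpa using mul_le_mul hfrac (hx _ hlt) (abs_nonneg _) zero_le_one
  · have : u = ⌊u⌋₊ := le_antisymm (by rwa [heq]) (Nat.floor_le hu)
    simp [← this]

lemma abs_sum_range_sub_sum_range_le (hx : ∀ i < n, |x i| ≤ 1) {k m : ℕ} (hkm : k ≤ m)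
    (hmn : m ≤ n) : |∑ i ∈ range m, x i - ∑ i ∈ range k, x i| ≤ (m : ℝ) - k := by
  rw [← sum_Ico_eq_sub x hkm]
  calc |∑ i ∈ Ico k m, x i| ≤ ∑ i ∈ Ico k m, |x i| := abs_sum_le_sum_abs _ _
    _ ≤ ∑ _i ∈ Ico k m, (1 : ℝ) :=
        sum_le_sum fun i hi => hx i ((mem_Ico.1 hi).2.trans_le hmn)
    _ = (m : ℝ) - k := by simp [Nat.cast_sub hkm]

lemma abs_partialSumInterp_sub_le (hx : ∀ i < n, |x i| ≤ 1) {a b : ℝ} (ha : 0 ≤ a) (hab : a ≤ b)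
    (hbn : b ≤ n) : |partialSumInterp x b - partialSumInterp x a| ≤ b - a + 3 := by
  have hkm : ⌊a⌋₊ ≤ ⌊b⌋₊ := Nat.floor_le_floor hab
  have hb := abs_partialSumInterp_sub_sum_floor_le hx (ha.trans hab) hbn
  have ha' := abs_partialSumInterp_sub_sum_floor_le hx ha (hab.trans hbn)
  have hsum := abs_sum_range_sub_sum_range_le hx hkm (Nat.floor_le_of_le hbn)
  have hgap : (⌊b⌋₊ : ℝ) - ⌊a⌋₊ ≤ b - a + 1 := by
    linarith [Nat.floor_le (ha.trans hab), Nat.lt_floor_add_one a]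
  have hb' := abs_sub_le (partialSumInterp x b) (∑ i ∈ range ⌊b⌋₊, x i) (partialSumInterp x a)
  have ha'' := abs_sub_le (∑ i ∈ range ⌊b⌋₊, x i) (∑ i ∈ range ⌊a⌋₊, x i) (partialSumInterp x a)
  linarith [abs_sub_comm (∑ i ∈ range ⌊a⌋₊, x i) (partialSumInterp x a)]

lemma abs_ell_sub_ell_le (hx : ∀ i < n, |x i| ≤ 1) {s t : ℝ} (hs : s ∈ Set.Icc (0 : ℝ) 1)
    (ht : t ∈ Set.Icc (0 : ℝ) 1) : |ell n x s - ell n x t| ≤ (n * |s - t| + 3) / √n := by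
  wlog hst : s ≤ t generalizing s t
  · rw [abs_sub_comm, abs_sub_comm s]
    exact this ht hs (le_of_not_ge hst)
  rw [ell_eq_partialSumInterp, ell_eq_partialSumInterp, ← sub_div, abs_div,
    abs_of_nonneg (sqrt_nonneg _), abs_sub_comm, abs_sub_comm s, abs_of_nonneg (sub_nonneg.2 hst)]
  gcongr
  have hn : (0 : ℝ) ≤ n := n.cast_nonneg
  refine (abs_partialSumInterp_sub_le hx (mul_nonneg hs.1 hn) (mul_le_mul_of_nonneg_right hst hn)
    (mul_le_of_le_one_left hn ht.2)).trans_eq ?_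
  ring

end partialSumInterp

lemma log_sub_log_two_div_le_mul_log_inv {δ n : ℝ} (hδ : 0 < δ) (hn : 2 ≤ n) (hδn : 1 / δ ≤ n) (hnδ : n ≤ 2 / δ) :
    (log n - log 2) / n ≤ δ * log (1 / δ) := by
  have hlog : log n - log 2 ≤ log (1 / δ) := by
    rw [← log_div (by linarith) two_ne_zero]
    exact log_le_log (by linarith) (by rwa [div_le_iff₀ two_pos, div_mul_eq_mul_div, one_mul])
  have hn0 : 0 < n := by linarith
  calc (log n - log 2) / n = 1 / n * (log n - log 2) := by ring
    _ ≤ δ * log (1 / δ) :=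
        mul_le_mul (by rwa [div_le_iff₀ hn0, mul_comm, ← div_le_iff₀ hδ]) hlog
          (by linarith [log_le_log two_pos hn]) hδ.le

lemma sqrt_add_five_lt_mul_sqrt_sub_log_two {u : ℝ} (hu : 10000 ≤ u) : √u + 5 < 13 / 10 * √(u - log 2) := by
  have hlog2 : log 2 < 1 := log_two_lt_d9.trans (by norm_num)
  have ha : (99 : ℝ) ≤ √(u - log 2) := by
    rw [le_sqrt (by norm_num) (by linarith)]
    linarith
  nlinarith [sq_sqrt (show 0 ≤ u by linarith), sq_sqrt (show 0 ≤ u - log 2 by linarith),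
    sqrt_nonneg u, sq_nonneg (√u - √(u - log 2) - 1)]

lemma natCeil_inv_le_two_div {δ : ℝ} (hδ : 0 < δ) (hδ2 : δ ≤ 2) : (⌈1 / δ⌉₊ : ℝ) ≤ 2 / δ :=
  (Nat.ceil_le_two_mul (by rw [one_div]; gcongr)).trans_eq (mul_one_div 2 δ)

lemma lt_log_natCeil_inv {δ K : ℝ} (hδ : 0 < δ) (hδK : δ < exp (-K)) : K < log ⌈1 / δ⌉₊ := by
  have hK : exp K < 1 / δ := by rwa [lt_one_div (exp_pos _) hδ, one_div, ← exp_neg]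
  rw [← log_exp K]
  exact log_lt_log (exp_pos _) (hK.trans_le (Nat.le_ceil _))

theorem stmt8_general (W : ℝ → ℝ)
    (hLevy : ∀ ε > (0:ℝ), ∀ θ > (0:ℝ), ∃ δ : ℝ, 0 < δ ∧ δ < ε ∧
      ∃ s ∈ Set.Icc (0:ℝ) 1, ∃ t ∈ Set.Icc (0:ℝ) 1, |s - t| < δ ∧
        (Real.sqrt 2 - θ) * Real.sqrt (δ * Real.log (1/δ)) ≤ |W s - W t|) :
    ¬ ∃ n₀ : ℕ, ∀ n : ℕ, n₀ ≤ n → ∃ x : ℕ → ℝ,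
      (∀ i < n, x i = 1 ∨ x i = -1) ∧
      ∀ t ∈ Set.Icc (0:ℝ) 1,
        |W t - ell n x t| ≤ (1/2) * Real.sqrt (Real.log n / n) := by
  rintro ⟨n₀, happrox⟩
  have hθ : 0 < √2 - 13 / 10 := sub_pos.2 ((lt_sqrt (by norm_num)).2 (by norm_num))
  obtain ⟨δ, hδ, hδε, s, hs, t, ht, hst, hWst⟩ := hLevy _ (exp_pos (-(10000 + n₀))) _ hθ
  rw [sub_sub_cancel] at hWst
  set n := ⌈1 / δ⌉₊
  have hlog : 10000 + n₀ < log n := lt_log_natCeil_inv hδ hδε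
  have hδ1 : δ < 1 := hδε.trans (exp_lt_one_iff.2 (by linarith [n₀.cast_nonneg (α := ℝ)]))
  have hδn : 1 / δ ≤ n := Nat.le_ceil _
  have hnδ : (n : ℝ) ≤ 2 / δ := natCeil_inv_le_two_div hδ (by linarith)
  have hn0 : (0 : ℝ) < n := (one_div_pos.2 hδ).trans_le hδn
  have hn₀ : n₀ ≤ n := by
    exact_mod_cast (show (n₀ : ℝ) ≤ n by linarith [log_le_self hn0.le])
  obtain ⟨x, hx, hxW⟩ := happrox n hn₀
  have hell : |ell n x s - ell n x t| ≤ 5 / √n := by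
    refine (abs_ell_sub_ell_le (fun i hi => by rcases hx i hi with h | h <;> simp [h]) hs ht).trans ?_
    gcongr
    rw [le_div_iff₀ hδ] at hnδ
    linarith [mul_le_mul_of_nonneg_left hst.le hn0.le]
  have hupper : |W s - W t| ≤ (√(log n) + 5) / √n := by
    rw [sqrt_div' _ hn0.le] at hxW
    linarith [abs_sub_le (W s) (ell n x s) (W t), abs_sub_le (ell n x s) (ell n x t) (W t),
      abs_sub_comm (ell n x t) (W t), hxW s hs, hxW t ht, add_div (√(log n)) 5 √n]
  have hlower : 13 / 10 * √(log n - log 2) / √n ≤ |W s - W t| := by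
    refine le_trans ?_ hWst
    rw [mul_div_assoc, ← sqrt_div' _ hn0.le]
    gcongr
    exact log_sub_log_two_div_le_mul_log_inv hδ (by linarith [log_le_self hn0.le]) hδn hnδ
  have := (div_le_div_iff_of_pos_right (sqrt_pos.2 hn0)).1 (hlower.trans hupper)
  exact (sqrt_add_five_lt_mul_sqrt_sub_log_two (by linarith [n₀.cast_nonneg (α := ℝ)])).not_ge this

/-- a continuous `W` with Lévy-type large increments cannot be approximated
by `n`-step walks within `(1/2)√(log n / n)` for all large `n`. -/
theorem stmt8 (W : ℝ → ℝ) (hW : ContinuousOn W (Set.Icc 0 1))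
    (hLevy : ∀ ε > (0:ℝ), ∀ θ > (0:ℝ), ∃ δ : ℝ, 0 < δ ∧ δ < ε ∧
      ∃ s ∈ Set.Icc (0:ℝ) 1, ∃ t ∈ Set.Icc (0:ℝ) 1, |s - t| < δ ∧
        (Real.sqrt 2 - θ) * Real.sqrt (δ * Real.log (1/δ)) ≤ |W s - W t|) :
    ¬ ∃ n₀ : ℕ, ∀ n : ℕ, n₀ ≤ n → ∃ x : ℕ → ℝ,
      (∀ i < n, x i = 1 ∨ x i = -1) ∧
      ∀ t ∈ Set.Icc (0:ℝ) 1,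
        |W t - ell n x t| ≤ (1/2) * Real.sqrt (Real.log n / n) :=
  stmt8_general W hLevy
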